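/- The distinguished boundary of the pentablock equals the union of the orbits of (1,0,1) and (0,2,1) under its automorphism group: b𝔓̄ = { f_{ωv}(1,0,1) : ω ∈ 𝕋, v ∈ Aut(𝔻) } ∪ { f_{ωv}(0,2,1) : ω ∈ 𝕋, v ∈ Aut(𝔻) }. -/

import Mathlib

/-!
A boundary point `(a, z₁ + z₂, z₁ z₂)` with `z₁ = z₂` has `a = 0` and is `f_{ωv}(0,2,1)` for
`v = -z₁ B₀`. If `z₁ ≠ z₂`, write `z₁ = η w`, `z₂ = η w̄` with `|η| = |w| = 1` and `Im w < 0`;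
with `t ∈ (-1, 1)` the stereographic coordinate of `w`, the automorphism `v = η B_t` sends
`i, -i` to `z₁, z₂`, and `(1 - t²)/(1 + t²) = -Im w = |a|`, which determines `ω`. Conversely,
automorphisms of the disc preserve the circle, and the identity
`|1 + α²|² = (1 - |α|²)² + (2 Re α)²` puts the orbit of `(1,0,1)` on the sphere
`|a|² + |s|²/4 = 1`.
-/

open Complex

/-- Möbius automorphism of the unit disc. -/
noncomputable def discAut (η α z : ℂ) : ℂ := η * (z - α) / (starRingEnd ℂ α * z - 1)

open ComplexConjugate

lemma conj_mul_sub_one_ne_zero {α z : ℂ} (hα : ‖α‖ < 1) (hz : ‖z‖ ≤ 1) :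
    conj α * z - 1 ≠ 0 := by
  intro h
  have : ‖conj α * z‖ = 1 := by rw [sub_eq_zero.mp h, norm_one]
  rw [norm_mul, norm_conj] at this
  nlinarith [norm_nonneg α, norm_nonneg z]

lemma norm_conj_mul_sub_one {α z : ℂ} (hz : ‖z‖ = 1) : ‖conj α * z - 1‖ = ‖z - α‖ := by
  have hz₀ : z ≠ 0 := norm_ne_zero_iff.mp (by rw [hz]; exact one_ne_zero)
  calc ‖conj α * z - 1‖ = ‖z‖ * ‖conj α - z⁻¹‖ := by
        rw [← norm_mul, mul_sub, mul_comm, mul_inv_cancel₀ hz₀]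
    _ = ‖z - α‖ := by rw [hz, one_mul, inv_eq_conj hz, ← map_sub, norm_conj, norm_sub_rev]

lemma norm_discAut {η α z : ℂ} (hη : ‖η‖ = 1) (hα : ‖α‖ < 1) (hz : ‖z‖ = 1) :
    ‖discAut η α z‖ = 1 := by
  have hden : ‖conj α * z - 1‖ ≠ 0 := norm_ne_zero_iff.mpr (conj_mul_sub_one_ne_zero hα hz.le)
  rw [discAut, norm_div, norm_mul, hη, one_mul, ← norm_conj_mul_sub_one hz, div_self hden]

lemma one_add_sq_ne_zero {z : ℂ} (hz : ‖z‖ < 1) : 1 + z ^ 2 ≠ 0 := by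
  intro h
  have : ‖z‖ ^ 2 = 1 := by rw [← norm_pow, eq_neg_of_add_eq_zero_right h, norm_neg, norm_one]
  nlinarith [norm_nonneg z]

lemma discAut_I_add_discAut_neg_I {η α : ℂ} (hα : 1 + conj α ^ 2 ≠ 0) :
    discAut η α I + discAut η α (-I) = 2 * η * (α + conj α) / (1 + conj α ^ 2) := by
  have hfactor : (conj α * I - 1) * (conj α * -I - 1) = 1 + conj α ^ 2 := by
    linear_combination (-conj α ^ 2) * I_sq
  have hden : (conj α * I - 1) * (conj α * -I - 1) ≠ 0 := hfactor ▸ hα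
  rw [discAut, discAut, div_add_div _ _ (left_ne_zero_of_mul hden) (right_ne_zero_of_mul hden),
    div_eq_div_iff hden hα]
  linear_combination (2 * η * conj α * (α * conj α - 1)) * I_sq

lemma norm_one_add_sq_sq (z : ℂ) : ‖1 + z ^ 2‖ ^ 2 = (1 - ‖z‖ ^ 2) ^ 2 + (2 * z.re) ^ 2 := by
  rw [Complex.sq_norm, Complex.sq_norm, normSq_apply, normSq_apply]
  simp only [add_re, add_im, one_re, one_im, sq, mul_re, mul_im]
  ring

lemma norm_sq_add_norm_sq_div_four_of_orbit_one {ω η α : ℂ} (hω : ‖ω‖ = 1) (hη : ‖η‖ = 1)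
    (hα : ‖α‖ < 1) :
    ‖ω * η * (1 - (‖α‖ : ℂ) ^ 2) / (1 + conj α ^ 2)‖ ^ 2
      + ‖discAut η α I + discAut η α (-I)‖ ^ 2 / 4 = 1 := by
  have hN : 1 + conj α ^ 2 ≠ 0 := one_add_sq_ne_zero (by rwa [norm_conj])
  have hsq := norm_one_add_sq_sq (conj α)
  rw [norm_conj, conj_re] at hsq
  have hcast : (1 - (‖α‖ : ℂ) ^ 2) = ((1 - ‖α‖ ^ 2 : ℝ) : ℂ) := by push_cast; rfl
  rw [discAut_I_add_discAut_neg_I hN, add_conj, hcast]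
  simp only [norm_div, norm_mul, hω, hη, norm_real, Real.norm_eq_abs, div_pow, mul_pow, sq_abs,
    Complex.norm_two]
  field_simp
  rw [hsq]
  ring

lemma re_sq_add_im_sq_of_norm_eq_one {w : ℂ} (hw : ‖w‖ = 1) : w.re ^ 2 + w.im ^ 2 = 1 := by
  rw [sq, sq, ← normSq_apply, ← Complex.sq_norm, hw, one_pow]

lemma exists_eq_mul_and_eq_mul_conj {z₁ z₂ : ℂ} (h₁ : ‖z₁‖ = 1) (h₂ : ‖z₂‖ = 1)
    (hne : z₁ ≠ z₂) :
    ∃ η w : ℂ, ‖η‖ = 1 ∧ ‖w‖ = 1 ∧ w.im < 0 ∧ z₁ = η * w ∧ z₂ = η * conj w := by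
  obtain ⟨η, hη⟩ := IsAlgClosed.exists_eq_mul_self (z₁ * z₂)
  have hηnorm : ‖η‖ = 1 := by
    have := congrArg norm hη
    rw [norm_mul, norm_mul, h₁, h₂, one_mul] at this
    nlinarith [norm_nonneg η]
  have hη₀ : η ≠ 0 := norm_ne_zero_iff.mp (by rw [hηnorm]; exact one_ne_zero)
  have hz₁ : z₁ ≠ 0 := norm_ne_zero_iff.mp (by rw [h₁]; exact one_ne_zero)
  set w := z₁ / η
  have hw : ‖w‖ = 1 := by rw [norm_div, h₁, hηnorm, div_one]
  have hz₁w : z₁ = η * w := (mul_div_cancel₀ z₁ hη₀).symm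
  have hz₂w : z₂ = η * conj w := by
    rw [← inv_eq_conj hw, inv_div, mul_div_assoc', ← hη, mul_div_cancel_left₀ z₂ hz₁]
  have him : w.im ≠ 0 := fun h => hne (by rw [hz₁w, hz₂w, conj_eq_iff_im.mpr h])
  rcases him.lt_or_gt with him | him
  · exact ⟨η, w, hηnorm, hw, him, hz₁w, hz₂w⟩
  · refine ⟨-η, -w, by rwa [norm_neg], by rwa [norm_neg], by simpa using him, ?_, ?_⟩
    · rw [neg_mul_neg, hz₁w]
    · rw [map_neg, neg_mul_neg, hz₂w]

lemma exists_I_sub_ofReal_eq_mul {w : ℂ} (hw : ‖w‖ = 1) (him : w.im < 0) :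
    ∃ t : ℝ, |t| < 1 ∧ I - t = w * (t * I - 1) ∧ (1 - t ^ 2) / (1 + t ^ 2) = -w.im := by
  have hre_im := re_sq_add_im_sq_of_norm_eq_one hw
  have hpos : 0 < 1 - w.im := by linarith
  -- inverse stereographic projection: `w = (2t + (t² - 1) i) / (1 + t²)`
  set t := w.re / (1 - w.im)
  have ht₁ : t * (1 - w.im) = w.re := div_mul_cancel₀ _ hpos.ne'
  have ht₂ : t * w.re = 1 + w.im := by
    refine mul_right_cancel₀ hpos.ne' ?_
    linear_combination w.re * ht₁ + hre_im
  have ht_sq : t ^ 2 * (1 - w.im) = 1 + w.im := by linear_combination t * ht₁ + ht₂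
  refine ⟨t, (sq_lt_one_iff_abs_lt_one t).mp (by nlinarith), ?_, ?_⟩
  · apply Complex.ext <;> simp <;> linarith
  · rw [div_eq_iff (by positivity)]
    refine mul_right_cancel₀ hpos.ne' ?_
    linear_combination (-(1 - w.im)) * ht_sq

lemma discAut_ofReal_I {η w : ℂ} {t : ℝ} (h : I - t = w * (t * I - 1)) :
    discAut η t I = η * w := by
  have hden : (t : ℂ) * I - 1 ≠ 0 := fun h0 => by simpa using congrArg re h0
  rw [discAut, conj_ofReal, h, div_eq_iff hden]
  ring

lemma discAut_ofReal_neg_I {η w : ℂ} {t : ℝ} (h : I - t = w * (t * I - 1)) :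
    discAut η t (-I) = η * conj w := by
  have hden : (t : ℂ) * -I - 1 ≠ 0 := fun h0 => by simpa using congrArg re h0
  have hconj := congrArg conj h
  simp only [map_sub, map_mul, conj_I, conj_ofReal, map_one] at hconj
  rw [discAut, conj_ofReal, div_eq_iff hden, hconj]
  ring

lemma exists_orbit_one_of_ne {a z₁ z₂ : ℂ} (h₁ : ‖z₁‖ = 1) (h₂ : ‖z₂‖ = 1) (hne : z₁ ≠ z₂)
    (ha : ‖a‖ ^ 2 + ‖z₁ + z₂‖ ^ 2 / 4 = 1) :
    ∃ ω η α : ℂ, ‖ω‖ = 1 ∧ ‖η‖ = 1 ∧ ‖α‖ < 1 ∧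
      (a, z₁ + z₂, z₁ * z₂) = (ω * η * (1 - (‖α‖ : ℂ) ^ 2) / (1 + conj α ^ 2),
        discAut η α I + discAut η α (-I), discAut η α I * discAut η α (-I)) := by
  obtain ⟨η, w, hη, hw, him, rfl, rfl⟩ := exists_eq_mul_and_eq_mul_conj h₁ h₂ hne
  obtain ⟨t, ht, hkey, hratio⟩ := exists_I_sub_ofReal_eq_mul hw him
  have hη₀ : η ≠ 0 := norm_ne_zero_iff.mp (by rw [hη]; exact one_ne_zero)
  have hre_im := re_sq_add_im_sq_of_norm_eq_one hw
  have hnorm_a : ‖a‖ = -w.im := by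
    rw [← mul_add, add_conj, norm_mul, hη, one_mul, norm_real, Real.norm_eq_abs, sq_abs] at ha
    nlinarith [norm_nonneg a]
  refine ⟨a / (η * (-w.im : ℝ)), η, t, ?_, hη, by rwa [norm_real], ?_⟩
  · rw [norm_div, norm_mul, hη, one_mul, norm_real, Real.norm_eq_abs, abs_of_pos (by linarith),
      hnorm_a, div_self (by linarith)]
  · have hfirst : (1 - (‖(t : ℂ)‖ : ℂ) ^ 2) / (1 + conj (t : ℂ) ^ 2) = ((-w.im : ℝ) : ℂ) := by
      rw [← hratio, norm_real, Real.norm_eq_abs, conj_ofReal, ← ofReal_pow, sq_abs]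
      push_cast
      rfl
    rw [discAut_ofReal_I hkey, discAut_ofReal_neg_I hkey, mul_div_assoc, hfirst]
    congr 1
    rw [mul_assoc, div_mul_cancel₀ _ (mul_ne_zero hη₀ (by exact_mod_cast (neg_pos.mpr him).ne'))]

/-- The distinguished boundary of the pentablock is the union of the orbits of
`(1,0,1)` and `(0,2,1)` under its automorphism group `{f_{ωv}}`, where
`f_{ωv}(1,0,1) = (ωη(1-|α|²)/(1+ᾱ²), v(i)+v(-i), v(i)v(-i))` and
`f_{ωv}(0,2,1) = (0, 2v(1), v(1)²)` for `v = ηB_α`. -/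
theorem pentablock_boundary_eq_union_of_orbits :
    {x : ℂ × ℂ × ℂ | ‖x.1‖ ^ 2 + ‖x.2.1‖ ^ 2 / 4 = 1 ∧
        ∃ z₁ z₂ : ℂ, ‖z₁‖ = 1 ∧ ‖z₂‖ = 1 ∧
          x.2.1 = z₁ + z₂ ∧ x.2.2 = z₁ * z₂} =
      {x : ℂ × ℂ × ℂ | ∃ ω η α : ℂ, ‖ω‖ = 1 ∧ ‖η‖ = 1 ∧
          ‖α‖ < 1 ∧
          x = (ω * η * (1 - (‖α‖ : ℂ) ^ 2) / (1 + (starRingEnd ℂ α) ^ 2),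
            discAut η α Complex.I + discAut η α (-Complex.I),
            discAut η α Complex.I * discAut η α (-Complex.I))} ∪
      {x : ℂ × ℂ × ℂ | ∃ ω η α : ℂ, ‖ω‖ = 1 ∧ ‖η‖ = 1 ∧
          ‖α‖ < 1 ∧
          x = (0, 2 * discAut η α 1, (discAut η α 1) ^ 2)} := by
  ext x
  simp only [Set.mem_ofPred_eq, Set.mem_union]
  constructor
  · obtain ⟨a, s, p⟩ := x
    rintro ⟨ha, z₁, z₂, h₁, h₂, rfl, rfl⟩
    rcases eq_or_ne z₁ z₂ with rfl | hne
    · have ha₀ : a = 0 := by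
        rw [← two_mul, norm_mul, h₁, Complex.norm_two] at ha
        exact norm_eq_zero.mp (by nlinarith [norm_nonneg a])
      have hv : discAut (-z₁) 0 1 = z₁ := by simp [discAut]
      exact Or.inr ⟨1, -z₁, 0, norm_one, by rwa [norm_neg], by simp, by rw [hv, ha₀, two_mul, sq]⟩
    · exact Or.inl (exists_orbit_one_of_ne h₁ h₂ hne ha)
  · rintro (⟨ω, η, α, hω, hη, hα, rfl⟩ | ⟨ω, η, α, hω, hη, hα, rfl⟩)
    · exact ⟨norm_sq_add_norm_sq_div_four_of_orbit_one hω hη hα, _, _,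
        norm_discAut hη hα (by simp), norm_discAut hη hα (by simp), rfl, rfl⟩
    · have hv := norm_discAut hη hα (norm_one (α := ℂ))
      exact ⟨by norm_num [hv], _, _, hv, hv, two_mul _, sq _⟩
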